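/- Let φ(z) = (z² − 4z + 2)/(z² − 2z + 2), extended to ℙ¹(ℚ) = ℚ ∪ {∞} (note the denominator has no rational roots; φ(∞) = 1). Then φ has no rational preperiodic points: for every α ∈ ℙ¹(ℚ), the forward orbit {φⁿ(α) : n ≥ 0} is infinite, equivalently the map n ↦ φⁿ(α) is injective. -/

import Mathlib

/-!
Write `x = a / b` in lowest terms. Then `φ(x) = A / B` with `A = a² - 4ab + 2b²` and
`B = (a - b)² + b²`; the two forms have resultant `4` and `4 ∤ B`, so `gcd(A, B) ≤ 2` and the
denominator of `φ(x)` is at least `B / 2`. Hence denominators never decrease along an orbit and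
strictly increase as soon as `x ∉ ℤ`. The only integers mapped to integers are `0, 1, 2`, whose
orbits `0 ↦ 1 ↦ -1 ↦ 7/5` and `2 ↦ -1` leave `ℤ` within three steps, so the denominator of
`φ³(x)` always exceeds that of `x`, which rules out rational periodic points; `∞` is not periodic
either, as its image `1` is not. A map without periodic points has injective orbits.
-/

/-- The map `φ(z) = (z² − 4z + 2)/(z² − 2z + 2)` on `ℙ¹(ℚ)`, with
`φ(∞) = 1`. -/
def phi11 : Option ℚ → Option ℚ
  | none => some 1
  | some x =>
      if x ^ 2 - 2 * x + 2 = 0 then none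
      else some ((x ^ 2 - 4 * x + 2) / (x ^ 2 - 2 * x + 2))

open Function

theorem Function.injective_iterate_of_periodicPts_eq_empty {α : Type*} {f : α → α}
    (h : periodicPts f = ∅) (x : α) : Injective fun n => f^[n] x := by
  intro i j (heq : f^[i] x = f^[j] x)
  by_contra hne
  wlog hij : i < j generalizing i j
  · exact this heq.symm (Ne.symm hne) (by omega)
  have hper : IsPeriodicPt f (j - i) (f^[i] x) := by
    rw [IsPeriodicPt, IsFixedPt, ← iterate_add_apply, Nat.sub_add_cancel hij.le, heq]
  exact h.subset (mk_mem_periodicPts (Nat.sub_pos_of_lt hij) hper)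

theorem Int.not_four_dvd_sq_add_sq {a b : ℤ} (h : IsCoprime a b) : ¬ 4 ∣ a ^ 2 + b ^ 2 := by
  obtain ⟨k, rfl | rfl⟩ := Int.even_or_odd' a <;> obtain ⟨l, rfl | rfl⟩ := Int.even_or_odd' b
  · have := Int.isUnit_iff.mp (h.isUnit_of_dvd' (dvd_mul_right 2 k) (dvd_mul_right 2 l))
    omega
  · rw [show (2 * k) ^ 2 + (2 * l + 1) ^ 2 = 4 * (k ^ 2 + l ^ 2 + l) + 1 by ring,
      Int.dvd_add_right (dvd_mul_right _ _)]
    decide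
  · rw [show (2 * k + 1) ^ 2 + (2 * l) ^ 2 = 4 * (k ^ 2 + k + l ^ 2) + 1 by ring,
      Int.dvd_add_right (dvd_mul_right _ _)]
    decide
  · rw [show (2 * k + 1) ^ 2 + (2 * l + 1) ^ 2 = 4 * (k ^ 2 + k + l ^ 2 + l) + 2 by ring,
      Int.dvd_add_right (dvd_mul_right _ _)]
    decide

theorem le_two_of_dvd_of_dvd_of_isCoprime {a b c : ℤ} (h : IsCoprime a b) (hc : 0 < c)
    (hcA : c ∣ a ^ 2 - 4 * a * b + 2 * b ^ 2) (hcB : c ∣ a ^ 2 - 2 * a * b + 2 * b ^ 2) :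
    c ≤ 2 := by
  have hc4 : c ∣ 4 := by
    obtain ⟨r, s, hrs⟩ := h.pow (m := 3) (n := 3)
    -- `2a³ = (2b - 2a)A + (4a - 2b)B` and `4b³ = (a - 2b)A + (4b - a)B`
    have h4 : 4 = (2 * r * (2 * b - 2 * a) + s * (a - 2 * b)) * (a ^ 2 - 4 * a * b + 2 * b ^ 2) +
        (2 * r * (4 * a - 2 * b) + s * (4 * b - a)) * (a ^ 2 - 2 * a * b + 2 * b ^ 2) := by
      linear_combination -4 * hrs
    exact h4 ▸ dvd_add (hcA.mul_left _) (hcB.mul_left _)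
  have hB4 : ¬ 4 ∣ a ^ 2 - 2 * a * b + 2 * b ^ 2 := by
    convert Int.not_four_dvd_sq_add_sq (h.add_mul_right_left (-1)) using 2
    ring
  have := Int.le_of_dvd (by norm_num) hc4
  interval_cases c
  · norm_num
  · norm_num
  · norm_num at hc4
  · exact absurd hcB hB4

theorem Rat.le_mul_den_of_eq_div {q : ℚ} {A B k : ℤ} (hB : 0 < B) (hq : q = A / B)
    (hk : ∀ c, 0 < c → c ∣ A → c ∣ B → c ≤ k) : B ≤ k * q.den := by
  obtain ⟨c, hcA, hcB⟩ := Rat.num_den_mk hB.ne' (hq.trans (Rat.divInt_eq_div A B).symm)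
  have hc : 0 < c := pos_of_mul_pos_left (hcB ▸ hB) (by positivity)
  calc B = c * q.den := hcB
    _ ≤ k * q.den := by
      gcongr
      exact hk c hc ⟨_, hcA⟩ ⟨_, hcB⟩

theorem sq_sub_two_mul_add_two_pos {R : Type*} [CommRing R] [LinearOrder R]
    [IsStrictOrderedRing R] (x : R) : 0 < x ^ 2 - 2 * x + 2 := by
  nlinarith [sq_nonneg (x - 1)]

def phiQ (x : ℚ) : ℚ := (x ^ 2 - 4 * x + 2) / (x ^ 2 - 2 * x + 2)

theorem semiconj_some_phiQ_phi11 : Semiconj some phiQ phi11 := fun x => by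
  simp [phi11, phiQ, (sq_sub_two_mul_add_two_pos x).ne']

theorem two_mul_den_phiQ_ge (x : ℚ) :
    (x.num - x.den) ^ 2 + (x.den : ℤ) ^ 2 ≤ 2 * (phiQ x).den := by
  have hB : 0 < x.num ^ 2 - 2 * x.num * x.den + 2 * (x.den : ℤ) ^ 2 := by
    nlinarith [sq_nonneg (x.num - x.den), x.den_pos]
  have hφ : phiQ x = ((x.num ^ 2 - 4 * x.num * x.den + 2 * (x.den : ℤ) ^ 2 : ℤ) : ℚ) /
      ((x.num ^ 2 - 2 * x.num * x.den + 2 * (x.den : ℤ) ^ 2 : ℤ) : ℚ) := by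
    conv_lhs => rw [phiQ, ← Rat.num_div_den x]
    push_cast
    field_simp
  have := Rat.le_mul_den_of_eq_div hB hφ fun c hc =>
    le_two_of_dvd_of_dvd_of_isCoprime (Rat.isCoprime_num_den x) hc
  linarith

theorem den_lt_den_phiQ {x : ℚ} (hx : x.den ≠ 1) : x.den < (phiQ x).den := by
  have hnum : x.num ≠ x.den := fun h => hx <| by simpa [h] using x.reduced
  have h1 : 0 < (x.num - x.den) ^ 2 := sq_pos_of_ne_zero (sub_ne_zero.mpr hnum)
  have h2 : (2 : ℤ) ≤ x.den := by have := x.den_pos; omega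
  have := two_mul_den_phiQ_ge x
  have : (x.den : ℤ) < (phiQ x).den := by nlinarith
  exact_mod_cast this

theorem den_le_den_phiQ (x : ℚ) : x.den ≤ (phiQ x).den := by
  by_cases hx : x.den = 1
  · exact hx ▸ (phiQ x).den_pos
  · exact (den_lt_den_phiQ hx).le

theorem den_le_den_phiQ_iterate (x : ℚ) (n : ℕ) : x.den ≤ (phiQ^[n] x).den := by
  induction n with
  | zero => rfl
  | succ n ih => exact ih.trans (iterate_succ_apply' phiQ n x ▸ den_le_den_phiQ _)

theorem eq_zero_or_eq_one_or_eq_two_of_den_eq_one {x : ℚ} (hx : x.den = 1)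
    (hφx : (phiQ x).den = 1) : x = 0 ∨ x = 1 ∨ x = 2 := by
  have h := two_mul_den_phiQ_ge x
  rw [hx, hφx] at h
  push_cast at h
  rw [← Rat.coe_int_num_of_den_eq_one hx]
  have : 0 ≤ x.num := by nlinarith
  have : x.num ≤ 2 := by nlinarith
  interval_cases x.num <;> simp

theorem den_lt_den_phiQ_iterate_three (x : ℚ) : x.den < (phiQ^[3] x).den := by
  by_cases hx : x.den = 1
  · by_cases hφx : (phiQ x).den = 1
    · rcases eq_zero_or_eq_one_or_eq_two_of_den_eq_one hx hφx with rfl | rfl | rfl <;>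
        norm_num [phiQ]
    · calc x.den = 1 := hx
        _ < (phiQ (phiQ x)).den := by
          have := den_lt_den_phiQ hφx
          have := (phiQ x).den_pos
          omega
        _ ≤ (phiQ^[3] x).den := den_le_den_phiQ _
  · calc x.den < (phiQ x).den := den_lt_den_phiQ hx
      _ ≤ (phiQ^[2] (phiQ x)).den := den_le_den_phiQ_iterate _ 2

theorem not_isPeriodicPt_phiQ {n : ℕ} (hn : 0 < n) (x : ℚ) : ¬ IsPeriodicPt phiQ n x := by
  intro h
  have h3 : phiQ^[n * 3] x = x := h.mul_const 3
  have := den_le_den_phiQ_iterate (phiQ^[3] x) (n * 3 - 3)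
  rw [← iterate_add_apply, Nat.sub_add_cancel (by omega), h3] at this
  exact (den_lt_den_phiQ_iterate_three x).not_ge this

theorem periodicPts_phi11_eq_empty : periodicPts phi11 = ∅ := by
  refine Set.eq_empty_of_forall_notMem fun α ⟨n, hn, hα⟩ => ?_
  obtain ⟨x, hx⟩ : ∃ x, phi11 α = some x := by
    cases α with
    | none => exact ⟨1, rfl⟩
    | some x => exact ⟨phiQ x, (semiconj_some_phiQ_phi11 x).symm⟩
  have h := hα.apply
  rw [hx, IsPeriodicPt, IsFixedPt, ← (semiconj_some_phiQ_phi11.iterate_right n).eq] at h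
  exact not_isPeriodicPt_phiQ hn x (Option.some_injective _ h)

/-- Every point of `ℙ¹(ℚ)` has infinite forward orbit under
`φ(z) = (z² − 4z + 2)/(z² − 2z + 2)`; equivalently `n ↦ φⁿ(α)` is
injective. -/
theorem phi11_no_rational_preperiodic (α : Option ℚ) :
    (Set.range fun n : ℕ => phi11^[n] α).Infinite ∧
      Function.Injective fun n : ℕ => phi11^[n] α := by
  have hinj := injective_iterate_of_periodicPts_eq_empty periodicPts_phi11_eq_empty α
  exact ⟨Set.infinite_range_of_injective hinj, hinj⟩
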